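/- Let w, w*, x ∈ ℝ^d with ‖x‖₂ ≤ 1, and suppose |w·x| ≥ γ/2 for some γ > 0. Let η, η_x ∈ [0, 1/2) with η_x ≤ η, and set g = ((1−2η)·sign(w·x) − (1−2η_x)·sign(w*·x)) · x / max(|w·x|, γ/2). Then g·(w − w*) ≥ 2(err − η), where err = η_x if sign(w·x) = sign(w*·x) and err = 1 − η_x otherwise. -/

import Mathlib

/-!
Write `a = w·x`, `b = w*·x`; since `|a| ≥ γ/2` the clipping is inactive and
`g·(w − w*) = c (a − b) / |a|` with `c = (1−2η) sgn a − (1−2ηₓ) sgn b`.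
If the signs agree, `c = −2(η − ηₓ) sgn a` and `sgn a · (a − b) = |a| − |b| ≤ |a|`.
If they differ, `c = 2(1 − η − ηₓ) sgn a` and `sgn a · (a − b) = |a| + |b| ≥ |a|`.
-/

noncomputable def sgn (t : ℝ) : ℝ := if t ≥ 0 then 1 else -1

theorem sgn_mul_self (t : ℝ) : sgn t * t = |t| := by
  unfold sgn
  split_ifs with ht
  · rw [one_mul, abs_of_nonneg ht]
  · rw [neg_one_mul, abs_of_neg (not_le.mp ht)]

theorem sgn_eq_neg_of_sgn_ne {s t : ℝ} (h : sgn s ≠ sgn t) : sgn t = -sgn s := by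
  unfold sgn at *
  split_ifs at * <;> norm_num at *

theorem le_reweighted_mul_sub_of_sgn_eq {a b η ηx : ℝ} (hηx : ηx ≤ η) (h : sgn a = sgn b) :
    2 * (ηx - η) * |a| ≤ ((1 - 2 * η) * sgn a - (1 - 2 * ηx) * sgn b) * (a - b) := by
  have hb : sgn a * b = |b| := h ▸ sgn_mul_self b
  calc 2 * (ηx - η) * |a|
      ≤ 2 * (ηx - η) * (|a| - |b|) := by nlinarith [abs_nonneg b]
    _ = ((1 - 2 * η) * sgn a - (1 - 2 * ηx) * sgn b) * (a - b) := by
      rw [← sgn_mul_self a, ← hb, ← h]; ring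

theorem le_reweighted_mul_sub_of_sgn_ne {a b η ηx : ℝ} (hη : η + ηx ≤ 1) (h : sgn a ≠ sgn b) :
    2 * (1 - ηx - η) * |a| ≤ ((1 - 2 * η) * sgn a - (1 - 2 * ηx) * sgn b) * (a - b) := by
  have hb' := sgn_eq_neg_of_sgn_ne h
  have hb : -(sgn a * b) = |b| := by rw [← sgn_mul_self b, hb', neg_mul]
  calc 2 * (1 - ηx - η) * |a|
      ≤ 2 * (1 - ηx - η) * (|a| + |b|) := by nlinarith [abs_nonneg b]
    _ = ((1 - 2 * η) * sgn a - (1 - 2 * ηx) * sgn b) * (a - b) := by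
      rw [← sgn_mul_self a, ← hb, hb']; ring

theorem stmt_1_general {d : ℕ} (w wstar x : EuclideanSpace ℝ (Fin d)) (γ η ηx : ℝ)
    (hγ : 0 < γ) (hfar : |(inner ℝ w x : ℝ)| ≥ γ / 2)
    (hη1 : η < 1 / 2) (hηx : ηx ≤ η)
    (g : EuclideanSpace ℝ (Fin d))
    (hg : g = (((1 - 2 * η) * sgn (inner ℝ w x) - (1 - 2 * ηx) * sgn (inner ℝ wstar x))
      / max |(inner ℝ w x : ℝ)| (γ / 2)) • x)
    (err : ℝ)
    (herr : err = if sgn (inner ℝ w x) = sgn ((inner ℝ wstar x : ℝ)) then ηx else 1 - ηx) :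
    (inner ℝ g (w - wstar) : ℝ) ≥ 2 * (err - η) := by
  have ha : 0 < |(inner ℝ w x : ℝ)| := (half_pos hγ).trans_le hfar
  rw [hg, real_inner_smul_left, inner_sub_right, real_inner_comm w x, real_inner_comm wstar x,
    max_eq_left hfar, div_mul_eq_mul_div, ge_iff_le, le_div_iff₀ ha, herr]
  split_ifs with hsgn
  · exact le_reweighted_mul_sub_of_sgn_eq hηx hsgn
  · exact le_reweighted_mul_sub_of_sgn_ne (by linarith) hsgn

theorem stmt_1 {d : ℕ} (w wstar x : EuclideanSpace ℝ (Fin d)) (γ η ηx : ℝ)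
    (hγ : 0 < γ) (hx : ‖x‖ ≤ 1) (hfar : |(inner ℝ w x : ℝ)| ≥ γ / 2)
    (hη0 : 0 ≤ ηx) (hη1 : η < 1 / 2) (hηx : ηx ≤ η)
    (g : EuclideanSpace ℝ (Fin d))
    (hg : g = (((1 - 2 * η) * sgn (inner ℝ w x) - (1 - 2 * ηx) * sgn (inner ℝ wstar x))
      / max |(inner ℝ w x : ℝ)| (γ / 2)) • x)
    (err : ℝ)
    (herr : err = if sgn (inner ℝ w x) = sgn ((inner ℝ wstar x : ℝ)) then ηx else 1 - ηx) :
    (inner ℝ g (w - wstar) : ℝ) ≥ 2 * (err - η) :=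
  stmt_1_general w wstar x γ η ηx hγ hfar hη1 hηx g hg err herr
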